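/- For a 3×3 filter F, the convolution equation F∗X = B with reflexive boundary condition is equivalent to F̂₁·X·(U_n^R)^T + F̂₂·X + F̂₃·X·(L_n^R)^T = B, where F̂_i = tridiag(f_{1i}, f_{2i}, f_{3i}) with corner corrections f_{3i} added to the (1,1) entry and f_{1i} added to the (m,m) entry, and U_n^R, L_n^R are the shift matrices with reflecting corners. -/

import Mathlib

/-!
Both sides are the same 3 × 3 stencil sum over reflected indices. By the reflexive boundary
condition, row `p` of the padded array is row `min (p - 1) (m - 1)` of `X`, so the stencil at
`(i, j)` reads `X` at rows `i + 1, i, i - 1` and columns `j + 1, j, j - 1`, each reflected back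
into range. On the matrix side `Uᴿ` and `Lᴿ` are the 0–1 matrices of exactly these reflected
shifts and `F̂ = f₁ Uᴿ + f₂ 1 + f₃ Lᴿ`, so left multiplication by `F̂` and right multiplication by
`(Uᴿ)ᵀ`, `(Lᴿ)ᵀ` perform the same shifts of rows and columns.
-/

open Matrix

/-- Reflexive upper shift matrix: superdiagonal 1's plus an extra 1 at entry `(k,k)`. -/
def URmat (k : ℕ) : Matrix (Fin k) (Fin k) ℝ :=
  Matrix.of fun i j =>
    if (i : ℕ) + 1 = (j : ℕ) ∨ ((i : ℕ) = (j : ℕ) ∧ (i : ℕ) = k - 1) then 1 else 0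

/-- Reflexive lower shift matrix: subdiagonal 1's plus an extra 1 at entry `(1,1)`. -/
def LRmat (k : ℕ) : Matrix (Fin k) (Fin k) ℝ :=
  Matrix.of fun i j =>
    if (j : ℕ) + 1 = (i : ℕ) ∨ ((i : ℕ) = (j : ℕ) ∧ (i : ℕ) = 0) then 1 else 0

/-- `tridiag(f1, f2, f3)` with corner corrections: `f3` added to the `(1,1)` entry and
`f1` added to the `(m,m)` entry. -/
def triRMat (m : ℕ) (f1 f2 f3 : ℝ) : Matrix (Fin m) (Fin m) ℝ :=
  Matrix.of fun i j =>
    if (i : ℕ) = (j : ℕ) then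
      f2 + (if (i : ℕ) = 0 then f3 else 0) + (if (i : ℕ) = m - 1 then f1 else 0)
    else if (i : ℕ) + 1 = (j : ℕ) then f1
    else if (j : ℕ) + 1 = (i : ℕ) then f3
    else 0



/-- Index `i + 1 - a` (so `i + 1`, `i`, `i - 1` for `a = 0, 1, 2`), reflected back into `Fin k`
at both ends; truncated subtraction performs the reflection at the first index. -/
def reflShift {k : ℕ} (a : Fin 3) (i : Fin k) : Fin k :=
  ⟨min ((i : ℕ) + 1 - a) (k - 1), by have := i.isLt; omega⟩

@[simp]
lemma reflShift_one {k : ℕ} (i : Fin k) : reflShift 1 i = i := by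
  ext; simp only [reflShift]; omega

lemma URmat_eq_one_submatrix (k : ℕ) :
    URmat k = (1 : Matrix (Fin k) (Fin k) ℝ).submatrix (reflShift 0) id := by
  ext i j
  simp only [URmat, of_apply, submatrix_apply, one_apply, id, reflShift, Fin.ext_iff]
  congr 1
  apply propext
  omega

lemma LRmat_eq_one_submatrix (k : ℕ) :
    LRmat k = (1 : Matrix (Fin k) (Fin k) ℝ).submatrix (reflShift 2) id := by
  ext i j
  simp only [LRmat, of_apply, submatrix_apply, one_apply, id, reflShift, Fin.ext_iff]
  congr 1
  apply propext
  omega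

lemma triRMat_eq (k : ℕ) (f₁ f₂ f₃ : ℝ) :
    triRMat k f₁ f₂ f₃ = f₁ • URmat k + f₂ • (1 : Matrix (Fin k) (Fin k) ℝ) + f₃ • LRmat k := by
  ext i j
  simp only [triRMat, URmat, LRmat, Matrix.add_apply, Matrix.smul_apply, one_apply, of_apply,
    smul_eq_mul, Fin.ext_iff]
  split_ifs <;> first | omega | ring

lemma URmat_mul {ι : Type*} {k : ℕ} (Y : Matrix (Fin k) ι ℝ) :
    URmat k * Y = Y.submatrix (reflShift 0) id := by
  rw [URmat_eq_one_submatrix, ← Equiv.coe_refl, one_submatrix_mul]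
  rfl

lemma LRmat_mul {ι : Type*} {k : ℕ} (Y : Matrix (Fin k) ι ℝ) :
    LRmat k * Y = Y.submatrix (reflShift 2) id := by
  rw [LRmat_eq_one_submatrix, ← Equiv.coe_refl, one_submatrix_mul]
  rfl

lemma mul_URmat_transpose {ι : Type*} {k : ℕ} (Y : Matrix ι (Fin k) ℝ) :
    Y * (URmat k)ᵀ = Y.submatrix id (reflShift 0) := by
  rw [URmat_eq_one_submatrix, transpose_submatrix, transpose_one, ← Equiv.coe_refl,
    mul_submatrix_one]
  rfl

lemma mul_LRmat_transpose {ι : Type*} {k : ℕ} (Y : Matrix ι (Fin k) ℝ) :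
    Y * (LRmat k)ᵀ = Y.submatrix id (reflShift 2) := by
  rw [LRmat_eq_one_submatrix, transpose_submatrix, transpose_one, ← Equiv.coe_refl,
    mul_submatrix_one]
  rfl

lemma triRMat_mul_apply {ι : Type*} {k : ℕ} (f : Fin 3 → ℝ) (Y : Matrix (Fin k) ι ℝ)
    (i : Fin k) (j : ι) :
    (triRMat k (f 0) (f 1) (f 2) * Y) i j = ∑ a, f a * Y (reflShift a i) j := by
  simp only [triRMat_eq, Matrix.add_mul, Matrix.smul_mul, URmat_mul, LRmat_mul, Matrix.one_mul,
    Matrix.add_apply, Matrix.smul_apply, submatrix_apply, id, smul_eq_mul, Fin.sum_univ_three,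
    reflShift_one]

lemma reflSylvester_apply {m n : ℕ} (F : Matrix (Fin 3) (Fin 3) ℝ) (X : Matrix (Fin m) (Fin n) ℝ)
    (i : Fin m) (j : Fin n) :
    (triRMat m (F 0 0) (F 1 0) (F 2 0) * X * (URmat n)ᵀ
      + triRMat m (F 0 1) (F 1 1) (F 2 1) * X
      + triRMat m (F 0 2) (F 1 2) (F 2 2) * X * (LRmat n)ᵀ) i j
      = ∑ a, ∑ b, F a b * X (reflShift a i) (reflShift b j) := by
  simp only [Matrix.mul_assoc, mul_URmat_transpose, mul_LRmat_transpose, Matrix.add_apply,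
    triRMat_mul_apply (F · 0), triRMat_mul_apply (F · 1), triRMat_mul_apply (F · 2),
    submatrix_apply, id, Fin.sum_univ_three, reflShift_one]
  ring

lemma eq_reflect_of_boundary {α : Type*} {k : ℕ} (v : Fin (k + 2) → α)
    (h0 : v 0 = v 1) (hlast : v (Fin.last (k + 1)) = v (Fin.last k).castSucc)
    (p : Fin (k + 2)) : v p = v ⟨min ((p : ℕ) - 1) (k - 1) + 1, by omega⟩ := by
  obtain ⟨p, hp⟩ := p
  rcases (show p = 0 ∨ (p = k + 1 ∧ 0 < k) ∨ min (p - 1) (k - 1) + 1 = p by omega)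
    with rfl | ⟨rfl, hk⟩ | h
  · exact h0
  · rw [show (⟨k + 1, hp⟩ : Fin (k + 2)) = Fin.last (k + 1) from rfl, hlast]
    exact congrArg v (Fin.ext (by simp only [Fin.val_last, Fin.val_castSucc]; omega))
  · exact congrArg v (Fin.ext h.symm)

/-- The convolution equation `F ∗ X = B` with the reflexive boundary condition is equivalent to
the generalized Sylvester equation `F̂₁ X (Uₙᴿ)ᵀ + F̂₂ X + F̂₃ X (Lₙᴿ)ᵀ = B`.  Here
`x : Fin (m+2) → Fin (n+2) → ℝ` is the padded array determined by `X` in the interior and by the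
reflexive boundary condition on the boundary. -/
theorem stmt6 (m n : ℕ)
    (F : Matrix (Fin 3) (Fin 3) ℝ) (X B : Matrix (Fin m) (Fin n) ℝ)
    (x : Fin (m + 2) → Fin (n + 2) → ℝ)
    (hint : ∀ (i : Fin m) (j : Fin n), x i.succ.castSucc j.succ.castSucc = X i j)
    (htop : ∀ j, x 0 j = x ⟨1, by omega⟩ j)
    (hbot : ∀ j, x (Fin.last (m + 1)) j = x ⟨m, by omega⟩ j)
    (hleft : ∀ i, x i 0 = x i ⟨1, by omega⟩)
    (hright : ∀ i, x i (Fin.last (n + 1)) = x i ⟨n, by omega⟩) :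
    (∀ (i : Fin m) (j : Fin n),
        (∑ l₁ : Fin 3, ∑ l₂ : Fin 3, F l₁ l₂ *
          x ⟨(i : ℕ) + 2 - (l₁ : ℕ), by have h1 := i.isLt; have h2 := l₁.isLt; omega⟩
            ⟨(j : ℕ) + 2 - (l₂ : ℕ), by have h1 := j.isLt; have h2 := l₂.isLt; omega⟩) = B i j)
      ↔
    triRMat m (F 0 0) (F 1 0) (F 2 0) * X * (URmat n)ᵀ
      + triRMat m (F 0 1) (F 1 1) (F 2 1) * X
      + triRMat m (F 0 2) (F 1 2) (F 2 2) * X * (LRmat n)ᵀ = B := by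
  have hstencil (i : Fin m) (j : Fin n) (a b : Fin 3) :
      x ⟨(i : ℕ) + 2 - (a : ℕ), by omega⟩ ⟨(j : ℕ) + 2 - (b : ℕ), by omega⟩
        = X (reflShift a i) (reflShift b j) := by
    rw [eq_reflect_of_boundary (x _) (hleft _) (hright _),
      eq_reflect_of_boundary (x · _) (htop _) (hbot _), ← hint]
    congr 1 <;> ext <;> simp only [reflShift, Fin.val_succ, Fin.val_castSucc] <;> omega
  simp only [hstencil, ← reflSylvester_apply]
  exact Matrix.ext_iff
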